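/- arXiv:1707.00810 — 6 statements merged into one kernel-verified Lean document; each statement's English description precedes it below -/
import Mathlib

section
/- Let P_X, Q_X be probability mass functions on a finite set X with P_X ≪ Q_X, and let α ∈ (0,1]. Then the total variation distance satisfies |P_X - Q_X| ≤ sqrt((2/α) · D_α(P_X ‖ Q_X)), where D_α(P‖Q) = (1/(α-1)) log ∑_x P(x)^α Q(x)^{1-α} is the Rényi divergence of order α (with D_1 being the relative entropy). -/
/-!
Both sides are compared with the Hellinger sum `H² = ∑ (√P - √Q)²`.
Cauchy–Schwarz applied to `|P - Q| = |√P - √Q| (√P + √Q)` gives `(∑ |P - Q|)² ≤ 4 H²`.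
On the other side, the refined weighted AM–GM inequality
`a^α b^(1-α) + α(1-α)(√a - √b)² ≤ α a + (1-α) b` bounds the Rényi sum by `1 - α(1-α) H²`,
and `log W ≤ W - 1` turns this into `α H² ≤ D_α`; for `α = 1` the same comes from
`p log(p/q) ≥ 2 (p - √(pq))`.
-/

open Finset Real

namespace Real

lemma geom_mean_add_mul_sq_sqrt_sub_le_arith_mean_of_le_half {a b α : ℝ} (ha : 0 ≤ a)
    (hb : 0 ≤ b) (hα0 : 0 ≤ α) (hα : α ≤ 1 / 2) :
    a ^ α * b ^ (1 - α) + α * (√a - √b) ^ 2 ≤ α * a + (1 - α) * b := by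
  have hgm := geom_mean_le_arith_mean2_weighted (by linarith : 0 ≤ 2 * α)
    (by linarith : 0 ≤ 1 - 2 * α) (mul_nonneg (sqrt_nonneg a) (sqrt_nonneg b)) hb (by ring)
  have hsqrt_rpow : ∀ {c : ℝ}, 0 ≤ c → √c ^ (2 * α) = c ^ α := fun hc => by
    rw [sqrt_eq_rpow, ← rpow_mul hc]
    ring_nf
  have hlhs : (√a * √b) ^ (2 * α) * b ^ (1 - 2 * α) = a ^ α * b ^ (1 - α) := by
    rw [mul_rpow (sqrt_nonneg a) (sqrt_nonneg b), hsqrt_rpow ha, hsqrt_rpow hb, mul_assoc,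
      ← rpow_add' hb (by linarith), show α + (1 - 2 * α) = 1 - α by ring]
  rw [hlhs] at hgm
  linear_combination hgm + α * sq_sqrt ha + α * sq_sqrt hb

lemma geom_mean_add_mul_sq_sqrt_sub_le_arith_mean {a b α : ℝ} (ha : 0 ≤ a) (hb : 0 ≤ b)
    (hα0 : 0 ≤ α) (hα1 : α ≤ 1) :
    a ^ α * b ^ (1 - α) + α * (1 - α) * (√a - √b) ^ 2 ≤ α * a + (1 - α) * b := by
  have hsq := sq_nonneg (√a - √b)
  rcases le_total α (1 / 2) with hα | hα
  · have := geom_mean_add_mul_sq_sqrt_sub_le_arith_mean_of_le_half ha hb hα0 hα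
    nlinarith [mul_nonneg (sq_nonneg α) hsq]
  · have := geom_mean_add_mul_sq_sqrt_sub_le_arith_mean_of_le_half hb ha (by linarith)
      (by linarith : 1 - α ≤ 1 / 2)
    rw [sub_sub_cancel, ← neg_sub (√a), neg_sq] at this
    nlinarith [mul_nonneg (sq_nonneg (1 - α)) hsq]

lemma sq_sqrt_sub_add_sub_le_mul_log_div {p q : ℝ} (hp : 0 ≤ p) (hq : 0 ≤ q)
    (hpq : q = 0 → p = 0) : (√p - √q) ^ 2 + (p - q) ≤ p * log (p / q) := by
  rcases hp.eq_or_lt with rfl | hp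
  · simp [sq_sqrt hq]
  have hq : 0 < q := hq.lt_of_ne fun h => hp.ne' (hpq h.symm)
  have hsp : 0 < √p := sqrt_pos.mpr hp
  have hsq : 0 < √q := sqrt_pos.mpr hq
  have hlog : log (p / q) = -2 * log (√q / √p) := by
    rw [log_div hp.ne' hq.ne', log_div hsq.ne' hsp.ne', log_sqrt hp.le, log_sqrt hq.le]
    ring
  have hle := log_le_sub_one_of_pos (div_pos hsq hsp)
  have hratio : p * (√q / √p) = √p * √q := by
    field_simp
    rw [sq_sqrt hp.le]
  rw [hlog]
  nlinarith [sq_sqrt hp.le, sq_sqrt hq.le]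

end Real

noncomputable section Divergences

variable {X : Type*} [Fintype X]

/-- The Hellinger sum, normalised without the factor `1/2`. -/
def hellingerSq (P Q : X → ℝ) : ℝ := ∑ x, (√(P x) - √(Q x)) ^ 2

def renyiDiv (α : ℝ) (P Q : X → ℝ) : ℝ :=
  if α = 1 then ∑ x, P x * log (P x / Q x)
  else (1 / (α - 1)) * log (∑ x, P x ^ α * Q x ^ (1 - α))

lemma hellingerSq_nonneg (P Q : X → ℝ) : 0 ≤ hellingerSq P Q :=
  sum_nonneg fun _ _ => sq_nonneg _

lemma sq_sum_abs_sub_le_hellingerSq {P Q : X → ℝ} (hP : ∀ x, 0 ≤ P x) (hQ : ∀ x, 0 ≤ Q x) :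
    (∑ x, |P x - Q x|) ^ 2 ≤ 2 * (∑ x, P x + ∑ x, Q x) * hellingerSq P Q := by
  have hfactor : ∀ x, |√(P x) - √(Q x)| * (√(P x) + √(Q x)) = |P x - Q x| := fun x => by
    rw [← abs_of_nonneg (add_nonneg (sqrt_nonneg (P x)) (sqrt_nonneg (Q x))), ← abs_mul]
    congr 1
    linear_combination sq_sqrt (hP x) - sq_sqrt (hQ x)
  have hsum_sq : ∑ x, (√(P x) + √(Q x)) ^ 2 ≤ 2 * (∑ x, P x + ∑ x, Q x) := by
    rw [← sum_add_distrib, mul_sum]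
    refine sum_le_sum fun x _ => ?_
    nlinarith [sq_nonneg (√(P x) - √(Q x)), sq_sqrt (hP x), sq_sqrt (hQ x)]
  calc (∑ x, |P x - Q x|) ^ 2
      ≤ (∑ x, |√(P x) - √(Q x)| ^ 2) * ∑ x, (√(P x) + √(Q x)) ^ 2 := by
        simpa only [hfactor] using sum_mul_sq_le_sq_mul_sq univ
          (fun x => |√(P x) - √(Q x)|) (fun x => √(P x) + √(Q x))
    _ = hellingerSq P Q * ∑ x, (√(P x) + √(Q x)) ^ 2 := by simp only [sq_abs, hellingerSq]
    _ ≤ hellingerSq P Q * (2 * (∑ x, P x + ∑ x, Q x)) :=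
        mul_le_mul_of_nonneg_left hsum_sq (hellingerSq_nonneg P Q)
    _ = _ := mul_comm _ _

lemma hellingerSq_le_sum_mul_log_div {P Q : X → ℝ} (hP : ∀ x, 0 ≤ P x) (hQ : ∀ x, 0 ≤ Q x)
    (hsum : ∑ x, P x = ∑ x, Q x) (hac : ∀ x, Q x = 0 → P x = 0) :
    hellingerSq P Q ≤ ∑ x, P x * log (P x / Q x) :=
  calc hellingerSq P Q = ∑ x, ((√(P x) - √(Q x)) ^ 2 + (P x - Q x)) := by
        rw [sum_add_distrib, sum_sub_distrib, hsum, sub_self, add_zero, hellingerSq]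
    _ ≤ _ := sum_le_sum fun x _ => sq_sqrt_sub_add_sub_le_mul_log_div (hP x) (hQ x) (hac x)

lemma sum_rpow_mul_rpow_add_hellingerSq_le {P Q : X → ℝ} (hP : ∀ x, 0 ≤ P x)
    (hQ : ∀ x, 0 ≤ Q x) {α : ℝ} (hα0 : 0 ≤ α) (hα1 : α ≤ 1) :
    ∑ x, P x ^ α * Q x ^ (1 - α) + α * (1 - α) * hellingerSq P Q ≤
      α * ∑ x, P x + (1 - α) * ∑ x, Q x := by
  simp only [hellingerSq, mul_sum, ← sum_add_distrib]
  exact sum_le_sum fun x _ =>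
    geom_mean_add_mul_sq_sqrt_sub_le_arith_mean (hP x) (hQ x) hα0 hα1

lemma sum_rpow_mul_rpow_pos {P Q : X → ℝ} (hP : ∀ x, 0 ≤ P x) (hQ : ∀ x, 0 ≤ Q x)
    (hP_ne : ∑ x, P x ≠ 0) (hac : ∀ x, Q x = 0 → P x = 0) (α : ℝ) :
    0 < ∑ x, P x ^ α * Q x ^ (1 - α) := by
  obtain ⟨x, -, hx⟩ := exists_ne_zero_of_sum_ne_zero hP_ne
  have hPx : 0 < P x := (hP x).lt_of_ne' hx
  have hQx : 0 < Q x := (hQ x).lt_of_ne fun h => hx (hac x h.symm)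
  exact sum_pos' (fun y _ => mul_nonneg (rpow_nonneg (hP y) _) (rpow_nonneg (hQ y) _))
    ⟨x, mem_univ x, by positivity⟩

lemma mul_hellingerSq_le_renyiDiv {P Q : X → ℝ} (hP : ∀ x, 0 ≤ P x) (hP1 : ∑ x, P x = 1)
    (hQ : ∀ x, 0 ≤ Q x) (hQ1 : ∑ x, Q x = 1) (hac : ∀ x, Q x = 0 → P x = 0)
    {α : ℝ} (hα0 : 0 ≤ α) (hα1 : α ≤ 1) :
    α * hellingerSq P Q ≤ renyiDiv α P Q := by
  unfold renyiDiv
  split_ifs with hα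
  · rw [hα, one_mul]
    exact hellingerSq_le_sum_mul_log_div hP hQ (hP1.trans hQ1.symm) hac
  have hαlt : α - 1 < 0 := by linarith [lt_of_le_of_ne hα1 hα]
  have hW := sum_rpow_mul_rpow_add_hellingerSq_le hP hQ hα0 hα1
  rw [hP1, hQ1] at hW
  have hlog := log_le_sub_one_of_pos (sum_rpow_mul_rpow_pos hP hQ (by simp [hP1]) hac α)
  rw [one_div_mul_eq_div, le_div_iff_of_neg hαlt]
  linear_combination hlog + hW

end Divergences

/-- Pinsker-type inequality for the Rényi divergence of order `α ∈ (0,1]`: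
`|P - Q| ≤ sqrt((2/α) D_α(P‖Q))`, where `D_1` is the relative entropy. -/
theorem tv_le_sqrt_renyi {X : Type} [Fintype X]
    (P Q : X → ℝ) (hP0 : ∀ x, 0 ≤ P x) (hP1 : ∑ x, P x = 1)
    (hQ0 : ∀ x, 0 ≤ Q x) (hQ1 : ∑ x, Q x = 1)
    (hac : ∀ x, Q x = 0 → P x = 0)
    (α : ℝ) (hα0 : 0 < α) (hα1 : α ≤ 1) :
    (1 / 2) * ∑ x, |P x - Q x| ≤
      Real.sqrt ((2 / α) *
        (if α = 1 then ∑ x, P x * Real.log (P x / Q x)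
         else (1 / (α - 1)) * Real.log (∑ x, P x ^ α * Q x ^ (1 - α)))) := by
  have hTV : ((1 / 2) * ∑ x, |P x - Q x|) ^ 2 ≤ hellingerSq P Q := by
    have := sq_sum_abs_sub_le_hellingerSq hP0 hQ0
    rw [hP1, hQ1] at this
    linarith
  have hH := hellingerSq_nonneg P Q
  have hD := mul_hellingerSq_le_renyiDiv hP0 hP1 hQ0 hQ1 hac hα0.le hα1
  calc (1 / 2) * ∑ x, |P x - Q x| ≤ √(hellingerSq P Q) := le_sqrt_of_sq_le hTV
    _ ≤ √((2 / α) * renyiDiv α P Q) := by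
      refine sqrt_le_sqrt ?_
      calc hellingerSq P Q ≤ (2 / α) * (α * hellingerSq P Q) := by
            field_simp
            linarith
        _ ≤ (2 / α) * renyiDiv α P Q := by gcongr
end

section
/- Let M be a finite index set, and for each m ∈ M let X(m) be an i.i.d. random variable with distribution P_X on a finite set X; let P(m) = 1/|M| and let P_{Y|X} be a channel to a finite set Y, with Q_Y ∈ P(Y) satisfying P_{Y|X}(·|x) ≪ Q_Y for all x. Define the random output distribution P_{Y|U}(y) := ∑_m P(m) P_{Y|X}(y|X(m)). Then for every s ∈ [0,1], E[∑_y P_{Y|U}(y)^{1+s} Q_Y(y)^{-s}] ≤ |M|^{-s} ∑_{x,y} P_X(x) P_{Y|X}(y|x)^{1+s} Q_Y(y)^{-s} + ∑_y P_Y(y)^{1+s} Q_Y(y)^{-s}, where P_Y(y) = ∑_x P_X(x) P_{Y|X}(y|x). Equivalently, e^{s D_{1+s}(P_{YU} ‖ Q_Y × P_U)} ≤ e^{s D_{1+s}(P_{XY} ‖ P_X × Q_Y) - s log|M|} + e^{s D_{1+s}(P_Y ‖ Q_Y)}. -/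
/-!
Fix an output letter `y` and put `a x = W x y / |M|`, so that the inner quantity is the
`(1 + s)`-th moment of a sum `S = ∑ₘ a (c m)` of i.i.d. nonnegative terms. Writing
`S ^ (1 + s) = ∑ₘ a (c m) * S ^ s` and using `(u + v) ^ s ≤ u ^ s + v ^ s` for `s ∈ [0, 1]`
separates the diagonal terms `a (c m) ^ (1 + s)`, which produce the `|M| ^ (-s)` term, from
`a (c m) * (∑_{j ≠ m} a (c j)) ^ s`. The two factors of the latter are independent, and Jensen's
inequality for the concave `t ↦ t ^ s` bounds its expectation by `E a * (|M| * E a) ^ s`; summing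
over `m` gives `P_Y(y) ^ (1 + s)`. Weighting by `Q y ^ (-s)` and summing over `y` finishes.
-/

open Finset

lemma rpow_one_add_sum_le {I : Type} [Fintype I] [DecidableEq I] {a : I → ℝ}
    (ha : ∀ i, 0 ≤ a i) {s : ℝ} (hs0 : 0 ≤ s) (hs1 : s ≤ 1) :
    (∑ i, a i) ^ (1 + s) ≤ ∑ i, (a i ^ (1 + s) + a i * (∑ j : {j // j ≠ i}, a j) ^ s) := by
  rw [Real.rpow_one_add' (sum_nonneg fun i _ => ha i) (by linarith), sum_mul]
  refine sum_le_sum fun i _ => ?_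
  rw [Real.rpow_one_add' (ha i) (by linarith), ← mul_add, Fintype.sum_eq_add_sum_subtype_ne _ i]
  exact mul_le_mul_of_nonneg_left
    (Real.rpow_add_le_add_rpow (ha i) (sum_nonneg fun j _ => ha j) hs0 hs1) (ha i)

noncomputable def iidExpectation {I X : Type} [Fintype I] [DecidableEq I] [Fintype X]
    (P : X → ℝ) (f : (I → X) → ℝ) : ℝ :=
  ∑ c : I → X, (∏ i, P (c i)) * f c

section iidExpectation

variable {I X : Type} [Fintype I] [DecidableEq I] [Fintype X] {P : X → ℝ}

lemma iidExpectation_sum {ι : Type} (t : Finset ι) (f : ι → (I → X) → ℝ) :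
    iidExpectation P (fun c => ∑ k ∈ t, f k c) = ∑ k ∈ t, iidExpectation P (f k) := by
  simp only [iidExpectation, mul_sum]
  exact sum_comm

lemma iidExpectation_add (f g : (I → X) → ℝ) :
    iidExpectation P (fun c => f c + g c) = iidExpectation P f + iidExpectation P g := by
  simp only [iidExpectation, mul_add, sum_add_distrib]

lemma iidExpectation_mul_const (f : (I → X) → ℝ) (a : ℝ) :
    iidExpectation P (fun c => f c * a) = iidExpectation P f * a := by
  simp only [iidExpectation, sum_mul, mul_assoc]

lemma iidExpectation_mono (hP0 : ∀ x, 0 ≤ P x) {f g : (I → X) → ℝ} (hfg : ∀ c, f c ≤ g c) :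
    iidExpectation P f ≤ iidExpectation P g :=
  sum_le_sum fun c _ => mul_le_mul_of_nonneg_left (hfg c) (prod_nonneg fun _ _ => hP0 _)

lemma iidExpectation_const (hP1 : ∑ x, P x = 1) (a : ℝ) :
    iidExpectation P (fun _ : I → X => a) = a := by
  rw [iidExpectation, ← sum_mul, ← Fintype.prod_sum, hP1, prod_const_one, one_mul]

lemma iidExpectation_mul_indep (i : I) (F : X → ℝ) (G : ({j // j ≠ i} → X) → ℝ) :
    iidExpectation P (fun c => F (c i) * G (fun j => c j)) =
      (∑ x, P x * F x) * iidExpectation P G := by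
  rw [iidExpectation, iidExpectation, Fintype.sum_mul_sum,
    ← (Equiv.funSplitAt i X).symm.sum_comp, Fintype.sum_prod_type]
  refine sum_congr rfl fun x _ => sum_congr rfl fun e _ => ?_
  have hx : (Equiv.funSplitAt i X).symm (x, e) i = x := by simp
  have he (j : {j // j ≠ i}) : (Equiv.funSplitAt i X).symm (x, e) j = e j := by simp [j.2]
  rw [Fintype.prod_eq_mul_prod_subtype_ne _ i]
  simp only [hx, he]
  ring

lemma iidExpectation_eval (hP1 : ∑ x, P x = 1) (i : I) (F : X → ℝ) :
    iidExpectation P (fun c => F (c i)) = ∑ x, P x * F x := by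
  simpa only [mul_one, iidExpectation_const hP1] using
    iidExpectation_mul_indep (P := P) i F (fun _ => 1)

lemma iidExpectation_sum_eval (hP1 : ∑ x, P x = 1) (F : X → ℝ) :
    iidExpectation P (fun c : I → X => ∑ i, F (c i)) = Fintype.card I * ∑ x, P x * F x := by
  simp only [iidExpectation_sum, iidExpectation_eval hP1, sum_const, card_univ, nsmul_eq_mul]

lemma iidExpectation_rpow_le (hP0 : ∀ x, 0 ≤ P x) (hP1 : ∑ x, P x = 1) {f : (I → X) → ℝ}
    (hf : ∀ c, 0 ≤ f c) {s : ℝ} (hs0 : 0 ≤ s) (hs1 : s ≤ 1) :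
    iidExpectation P (fun c => f c ^ s) ≤ iidExpectation P f ^ s := by
  have hw : ∑ c : I → X, ∏ i, P (c i) = 1 := by
    simpa [iidExpectation] using iidExpectation_const (I := I) hP1 1
  simpa only [iidExpectation, smul_eq_mul] using
    (Real.concaveOn_rpow hs0 hs1).le_map_sum (fun c _ => prod_nonneg fun _ _ => hP0 _) hw
      (fun c _ => Set.mem_Ici.2 (hf c))

lemma iidExpectation_mul_rpow_sum_ne_le (hP0 : ∀ x, 0 ≤ P x) (hP1 : ∑ x, P x = 1)
    {a : X → ℝ} (ha : ∀ x, 0 ≤ a x) {s : ℝ} (hs0 : 0 ≤ s) (hs1 : s ≤ 1) (i : I) :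
    iidExpectation P (fun c => a (c i) * (∑ j : {j // j ≠ i}, a (c j)) ^ s) ≤
      (∑ x, P x * a x) * (Fintype.card I * ∑ x, P x * a x) ^ s := by
  have hμ : 0 ≤ ∑ x, P x * a x := sum_nonneg fun x _ => mul_nonneg (hP0 x) (ha x)
  rw [iidExpectation_mul_indep i a (fun e => (∑ j, a (e j)) ^ s)]
  refine mul_le_mul_of_nonneg_left ?_ hμ
  calc iidExpectation P (fun e : {j // j ≠ i} → X => (∑ j, a (e j)) ^ s)
      ≤ iidExpectation P (fun e : {j // j ≠ i} → X => ∑ j, a (e j)) ^ s :=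
        iidExpectation_rpow_le hP0 hP1 (fun e => sum_nonneg fun j _ => ha (e j)) hs0 hs1
    _ = (Fintype.card {j // j ≠ i} * ∑ x, P x * a x) ^ s := by
        rw [iidExpectation_sum_eval hP1]
    _ ≤ (Fintype.card I * ∑ x, P x * a x) ^ s := by
        gcongr
        exact Fintype.card_subtype_le _

lemma iidExpectation_rpow_one_add_sum_le (hP0 : ∀ x, 0 ≤ P x) (hP1 : ∑ x, P x = 1)
    {a : X → ℝ} (ha : ∀ x, 0 ≤ a x) {s : ℝ} (hs0 : 0 ≤ s) (hs1 : s ≤ 1) :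
    iidExpectation P (fun c : I → X => (∑ i, a (c i)) ^ (1 + s)) ≤
      Fintype.card I * ∑ x, P x * a x ^ (1 + s) +
        (Fintype.card I * ∑ x, P x * a x) ^ (1 + s) := by
  set n : ℝ := (Fintype.card I : ℝ)
  set μ := ∑ x, P x * a x
  have hnμ : 0 ≤ n * μ :=
    mul_nonneg (Nat.cast_nonneg _) (sum_nonneg fun x _ => mul_nonneg (hP0 x) (ha x))
  calc iidExpectation P (fun c : I → X => (∑ i, a (c i)) ^ (1 + s))
      ≤ iidExpectation P (fun c : I → X =>
          ∑ i, (a (c i) ^ (1 + s) + a (c i) * (∑ j : {j // j ≠ i}, a (c j)) ^ s)) :=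
        iidExpectation_mono hP0 fun c => rpow_one_add_sum_le (fun i => ha (c i)) hs0 hs1
    _ ≤ ∑ _i : I, (∑ x, P x * a x ^ (1 + s) + μ * (n * μ) ^ s) := by
        rw [iidExpectation_sum]
        refine sum_le_sum fun i _ => ?_
        rw [iidExpectation_add, iidExpectation_eval hP1 i (fun x => a x ^ (1 + s))]
        exact add_le_add_right (iidExpectation_mul_rpow_sum_ne_le hP0 hP1 ha hs0 hs1 i) _
    _ = n * ∑ x, P x * a x ^ (1 + s) + (n * μ) ^ (1 + s) := by
        rw [sum_const, card_univ, nsmul_eq_mul, Real.rpow_one_add' hnμ (by linarith)]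
        ring

end iidExpectation

lemma iidExpectation_rpow_one_add_mean_le {I X : Type} [Fintype I] [DecidableEq I] [Nonempty I]
    [Fintype X] {P : X → ℝ} (hP0 : ∀ x, 0 ≤ P x) (hP1 : ∑ x, P x = 1)
    {w : X → ℝ} (hw : ∀ x, 0 ≤ w x) {s : ℝ} (hs0 : 0 ≤ s) (hs1 : s ≤ 1) :
    iidExpectation P (fun c : I → X => (∑ i, (Fintype.card I : ℝ)⁻¹ * w (c i)) ^ (1 + s)) ≤
      (Fintype.card I : ℝ) ^ (-s) * ∑ x, P x * w x ^ (1 + s) + (∑ x, P x * w x) ^ (1 + s) := by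
  set n : ℝ := (Fintype.card I : ℝ)
  have hn : 0 < n := Nat.cast_pos.2 Fintype.card_pos
  have hscale_pow (x : X) :
      n * (P x * (n⁻¹ * w x) ^ (1 + s)) = n ^ (-s) * (P x * w x ^ (1 + s)) := by
    rw [Real.mul_rpow (inv_nonneg.2 hn.le) (hw x), Real.rpow_one_add' (inv_nonneg.2 hn.le)
      (by linarith), Real.inv_rpow hn.le, Real.rpow_neg hn.le]
    field_simp
  have hscale_mean : n * ∑ x, P x * (n⁻¹ * w x) = ∑ x, P x * w x := by
    rw [mul_sum]
    exact sum_congr rfl fun x _ => by field_simp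
  have h := iidExpectation_rpow_one_add_sum_le (I := I) hP0 hP1
    (fun x => mul_nonneg (inv_nonneg.2 hn.le) (hw x)) hs0 hs1
  rwa [mul_sum, sum_congr rfl fun x _ => hscale_pow x, ← mul_sum, hscale_mean] at h

theorem oneshot_direct_renyi_general {M X Y : Type} [Fintype M] [DecidableEq M] [Nonempty M]
    [Fintype X] [Fintype Y]
    (P : X → ℝ) (W : X → Y → ℝ) (Q : Y → ℝ) (s : ℝ)
    (hP0 : ∀ x, 0 ≤ P x) (hP1 : ∑ x, P x = 1)
    (hW0 : ∀ x y, 0 ≤ W x y)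
    (hQ0 : ∀ y, 0 ≤ Q y)
    (hs0 : 0 ≤ s) (hs1 : s ≤ 1) :
    ∑ c : M → X, (∏ m, P (c m)) *
        ∑ y, (∑ m, ((Fintype.card M : ℝ))⁻¹ * W (c m) y) ^ (1 + s) * (Q y) ^ (-s)
      ≤ (Fintype.card M : ℝ) ^ (-s) * ∑ x, ∑ y, P x * (W x y) ^ (1 + s) * (Q y) ^ (-s)
        + ∑ y, (∑ x, P x * W x y) ^ (1 + s) * (Q y) ^ (-s) := by
  change iidExpectation P _ ≤ _
  rw [iidExpectation_sum]
  simp only [iidExpectation_mul_const]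
  calc _ ≤ ∑ y, ((Fintype.card M : ℝ) ^ (-s) * ∑ x, P x * W x y ^ (1 + s)
            + (∑ x, P x * W x y) ^ (1 + s)) * Q y ^ (-s) :=
        sum_le_sum fun y _ => mul_le_mul_of_nonneg_right
          (iidExpectation_rpow_one_add_mean_le hP0 hP1 (fun x => hW0 x y) hs0 hs1)
          (Real.rpow_nonneg (hQ0 y) _)
    _ = _ := by
        simp only [add_mul, sum_add_distrib, mul_assoc, ← mul_sum, sum_mul]
        rw [sum_comm]
        simp only [mul_sum]

/-- One-shot direct bound for an i.i.d. random codebook: the expectation (over the codebook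
`c : M → X`, drawn i.i.d. from `P_X`) of `∑_y P_{Y|U}(y)^{1+s} Q_Y(y)^{-s}` is at most
`|M|^{-s} ∑_{x,y} P_X(x) P_{Y|X}(y|x)^{1+s} Q_Y(y)^{-s} + ∑_y P_Y(y)^{1+s} Q_Y(y)^{-s}`. -/
theorem oneshot_direct_renyi {M X Y : Type} [Fintype M] [DecidableEq M] [Nonempty M]
    [Fintype X] [Fintype Y]
    (P : X → ℝ) (W : X → Y → ℝ) (Q : Y → ℝ) (s : ℝ)
    (hP0 : ∀ x, 0 ≤ P x) (hP1 : ∑ x, P x = 1)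
    (hW0 : ∀ x y, 0 ≤ W x y) (hW1 : ∀ x, ∑ y, W x y = 1)
    (hQ0 : ∀ y, 0 ≤ Q y) (hQ1 : ∑ y, Q y = 1)
    (hac : ∀ x y, Q y = 0 → W x y = 0)
    (hs0 : 0 ≤ s) (hs1 : s ≤ 1) :
    ∑ c : M → X, (∏ m, P (c m)) *
        ∑ y, (∑ m, ((Fintype.card M : ℝ))⁻¹ * W (c m) y) ^ (1 + s) * (Q y) ^ (-s)
      ≤ (Fintype.card M : ℝ) ^ (-s) * ∑ x, ∑ y, P x * (W x y) ^ (1 + s) * (Q y) ^ (-s)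
        + ∑ y, (∑ x, P x * W x y) ^ (1 + s) * (Q y) ^ (-s) :=
  oneshot_direct_renyi_general P W Q s hP0 hP1 hW0 hQ0 hs0 hs1
end

section
/- Let M be a finite set with |M| = e^R, let f : M → X be any (possibly random) encoder with induced input distribution P_X(x) = ∑_m (1/|M|) P(f(m)=x), and let P_{Y|X} be a channel to a finite set Y with target Q_Y ∈ P(Y). Then for every s ∈ [0,1], the expected exponentiated Rényi divergence of the output mixture P_{Y|U}(y) = ∑_m (1/|M|) P_{Y|X}(y|f_U(m)) satisfies E_U[∑_y P_{Y|U}(y)^{1+s} Q_Y(y)^{-s}] ≥ max{ e^{-sR} ∑_{x,y} P_X(x) P_{Y|X}(y|x)^{1+s} Q_Y(y)^{-s}, ∑_y P_Y(y)^{1+s} Q_Y(y)^{-s} }, where P_Y = P_{Y|X} ∘ P_X. -/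
/-!
For a fixed value of `U` the output law `P_{Y|U} = |M|⁻¹ ∑_m W(·|f_U(m))` is a mixture of the
channel rows. Superadditivity of `t ↦ t^{1+s}` on `[0, ∞)` bounds `∑_y P_{Y|U}(y)^{1+s} Q(y)^{-s}`
from below by `|M|^{-(1+s)} ∑_m ∑_y W(y|f_U(m))^{1+s} Q(y)^{-s}`, and averaging over `U` gives the
first bound. Convexity of `t ↦ t^{1+s}` (Jensen over `U`, using `E_U P_{Y|U} = P_Y`) gives the second.
-/

open Finset

theorem Real.sum_rpow_le_rpow_sum {ι : Type*} (s : Finset ι) {a : ι → ℝ}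
    (ha : ∀ i ∈ s, 0 ≤ a i) {p : ℝ} (hp : 1 ≤ p) :
    ∑ i ∈ s, a i ^ p ≤ (∑ i ∈ s, a i) ^ p := by
  classical
  induction s using Finset.induction_on with
  | empty => simp [Real.zero_rpow (by linarith : p ≠ 0)]
  | insert i s hi ih =>
    have ha' : ∀ j ∈ s, 0 ≤ a j := fun j hj => ha j (mem_insert_of_mem hj)
    rw [sum_insert hi, sum_insert hi]
    calc a i ^ p + ∑ j ∈ s, a j ^ p ≤ a i ^ p + (∑ j ∈ s, a j) ^ p := by gcongr; exact ih ha'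
      _ ≤ (a i + ∑ j ∈ s, a j) ^ p :=
        Real.add_rpow_le_rpow_add (ha i (mem_insert_self i s)) (sum_nonneg ha') hp

theorem sum_weight_ite_mul {ι X : Type*} [Fintype X] [DecidableEq X] (s : Finset ι)
    (a : ι → ℝ) (g : ι → X) (A : X → ℝ) :
    ∑ x, (∑ i ∈ s, a i * if g i = x then 1 else 0) * A x = ∑ i ∈ s, a i * A (g i) := by
  simp only [sum_mul, mul_ite, ite_mul, mul_one, zero_mul, mul_zero]
  rw [sum_comm]
  simp

theorem sum_mixture_weight_ite_mul {U M X : Type*} [Fintype U] [Fintype M] [Fintype X]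
    [DecidableEq X] (μ : U → ℝ) (c : ℝ) (f : U → M → X) (A : X → ℝ) :
    ∑ x, (∑ u, μ u * ∑ m, c * if f u m = x then 1 else 0) * A x
      = ∑ u, μ u * ∑ m, c * A (f u m) := by
  calc _ = ∑ u, μ u * ∑ x, (∑ m, c * if f u m = x then 1 else 0) * A x := by
        simp only [sum_mul, mul_sum, mul_assoc]
        exact sum_comm
    _ = _ := by simp only [sum_weight_ite_mul]

section Renyi

variable {Y : Type*} [Fintype Y]

/-- `renyiSum P Q s = exp (s · D_{1+s}(P ‖ Q))` for probability vectors `P`, `Q`. -/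
noncomputable def renyiSum (P Q : Y → ℝ) (s : ℝ) : ℝ :=
  ∑ y, P y ^ (1 + s) * Q y ^ (-s)

theorem sum_mul_renyiSum {X : Type*} [Fintype X] (a : X → ℝ) (W : X → Y → ℝ) (Q : Y → ℝ)
    (s : ℝ) :
    ∑ x, a x * renyiSum (W x) Q s = ∑ x, ∑ y, a x * W x y ^ (1 + s) * Q y ^ (-s) := by
  simp only [renyiSum, mul_sum, mul_assoc]

theorem renyiSum_const_mul {P : Y → ℝ} (Q : Y → ℝ) (s : ℝ) {c : ℝ} (hc : 0 ≤ c)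
    (hP : ∀ y, 0 ≤ P y) :
    renyiSum (fun y => c * P y) Q s = c ^ (1 + s) * renyiSum P Q s := by
  simp only [renyiSum, mul_sum, Real.mul_rpow hc (hP _), mul_assoc]

theorem sum_renyiSum_le {ι : Type*} [Fintype ι] {P : ι → Y → ℝ} {Q : Y → ℝ} {s : ℝ}
    (hP : ∀ i y, 0 ≤ P i y) (hQ : ∀ y, 0 ≤ Q y) (hs : 0 ≤ s) :
    ∑ i, renyiSum (P i) Q s ≤ renyiSum (fun y => ∑ i, P i y) Q s := by
  unfold renyiSum
  rw [sum_comm]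
  gcongr with y
  rw [← sum_mul]
  gcongr
  · exact Real.rpow_nonneg (hQ y) _
  · exact Real.sum_rpow_le_rpow_sum _ (fun i _ => hP i y) (by linarith)

theorem renyiSum_mixture_le {ι : Type*} [Fintype ι] {μ : ι → ℝ} {P : ι → Y → ℝ} {Q : Y → ℝ}
    {s : ℝ} (hμ0 : ∀ i, 0 ≤ μ i) (hμ1 : ∑ i, μ i = 1) (hP : ∀ i y, 0 ≤ P i y)
    (hQ : ∀ y, 0 ≤ Q y) (hs : 0 ≤ s) :
    renyiSum (fun y => ∑ i, μ i * P i y) Q s ≤ ∑ i, μ i * renyiSum (P i) Q s := by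
  unfold renyiSum
  simp only [mul_sum]
  rw [sum_comm]
  gcongr with y
  simp only [← mul_assoc, ← sum_mul]
  gcongr
  · exact Real.rpow_nonneg (hQ y) _
  · exact Real.rpow_arith_mean_le_arith_mean_rpow _ μ (fun i => P i y) (fun i _ => hμ0 i) hμ1
      (fun i _ => hP i y) (by linarith)

theorem card_rpow_neg_mul_sum_renyiSum_le {M X : Type*} [Fintype M] (g : M → X)
    {W : X → Y → ℝ} {Q : Y → ℝ} {s : ℝ} (hW : ∀ x y, 0 ≤ W x y) (hQ : ∀ y, 0 ≤ Q y)
    (hs : 0 ≤ s) :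
    (Fintype.card M : ℝ) ^ (-s) * ∑ m, (Fintype.card M : ℝ)⁻¹ * renyiSum (W (g m)) Q s
      ≤ renyiSum (fun y => ∑ m, (Fintype.card M : ℝ)⁻¹ * W (g m) y) Q s := by
  set c : ℝ := (Fintype.card M : ℝ)⁻¹
  have hc : 0 ≤ c := by positivity
  have hcs : (Fintype.card M : ℝ) ^ (-s) * c = c ^ (1 + s) := by
    rw [Real.rpow_add' hc (by linarith), Real.rpow_one, Real.inv_rpow (Nat.cast_nonneg _),
      ← Real.rpow_neg (Nat.cast_nonneg _), mul_comm]
  calc (Fintype.card M : ℝ) ^ (-s) * ∑ m, c * renyiSum (W (g m)) Q s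
      = ∑ m, renyiSum (fun y => c * W (g m) y) Q s := by
        simp only [mul_sum, ← mul_assoc, hcs, renyiSum_const_mul Q s hc (hW _)]
    _ ≤ _ := sum_renyiSum_le (fun m y => mul_nonneg hc (hW _ y)) hQ hs

end Renyi

theorem oneshot_converse_renyi_general {U M X Y : Type}
    [Fintype U] [Fintype M] [Fintype X] [DecidableEq X] [Fintype Y]
    (μ : U → ℝ) (f : U → M → X) (W : X → Y → ℝ) (Q : Y → ℝ) (s : ℝ)
    (hμ0 : ∀ u, 0 ≤ μ u) (hμ1 : ∑ u, μ u = 1)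
    (hW0 : ∀ x y, 0 ≤ W x y)
    (hQ0 : ∀ y, 0 ≤ Q y)
    (hs0 : 0 ≤ s) :
    max
      ((Fintype.card M : ℝ) ^ (-s) *
        ∑ x, ∑ y,
          (∑ u, μ u * ∑ m, (Fintype.card M : ℝ)⁻¹ * (if f u m = x then (1 : ℝ) else 0)) *
            (W x y) ^ (1 + s) * (Q y) ^ (-s))
      (∑ y,
        (∑ x, (∑ u, μ u * ∑ m, (Fintype.card M : ℝ)⁻¹ * (if f u m = x then (1 : ℝ) else 0)) *
            W x y) ^ (1 + s) * (Q y) ^ (-s))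
      ≤ ∑ u, μ u *
          ∑ y, (∑ m, (Fintype.card M : ℝ)⁻¹ * W (f u m) y) ^ (1 + s) * (Q y) ^ (-s) := by
  refine max_le ?_ ?_
  · rw [← sum_mul_renyiSum, sum_mixture_weight_ite_mul, mul_sum]
    refine sum_le_sum fun u _ => ?_
    rw [mul_left_comm]
    exact mul_le_mul_of_nonneg_left (card_rpow_neg_mul_sum_renyiSum_le (f u) hW0 hQ0 hs0) (hμ0 u)
  · simp only [sum_mixture_weight_ite_mul μ _ f]
    exact renyiSum_mixture_le hμ0 hμ1
      (fun u y => sum_nonneg fun m _ => mul_nonneg (by positivity) (hW0 _ y)) hQ0 hs0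

/-- One-shot converse bound: for any random encoder `f_U : M → X` (with randomness `U ~ μ`),
the expected exponentiated Rényi divergence of the output mixture is at least the maximum of
`e^{-sR} ∑_{x,y} P_X(x) W(y|x)^{1+s} Q(y)^{-s}` (where `e^R = |M|`) and
`∑_y P_Y(y)^{1+s} Q(y)^{-s}`, with `P_X` the induced input distribution. -/
theorem oneshot_converse_renyi {U M X Y : Type}
    [Fintype U] [Fintype M] [Nonempty M] [Fintype X] [DecidableEq X] [Fintype Y]
    (μ : U → ℝ) (f : U → M → X) (W : X → Y → ℝ) (Q : Y → ℝ) (s : ℝ)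
    (hμ0 : ∀ u, 0 ≤ μ u) (hμ1 : ∑ u, μ u = 1)
    (hW0 : ∀ x y, 0 ≤ W x y) (hW1 : ∀ x, ∑ y, W x y = 1)
    (hQ0 : ∀ y, 0 ≤ Q y) (hQ1 : ∑ y, Q y = 1)
    (hs0 : 0 ≤ s) (hs1 : s ≤ 1) :
    max
      ((Fintype.card M : ℝ) ^ (-s) *
        ∑ x, ∑ y,
          (∑ u, μ u * ∑ m, (Fintype.card M : ℝ)⁻¹ * (if f u m = x then (1 : ℝ) else 0)) *
            (W x y) ^ (1 + s) * (Q y) ^ (-s))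
      (∑ y,
        (∑ x, (∑ u, μ u * ∑ m, (Fintype.card M : ℝ)⁻¹ * (if f u m = x then (1 : ℝ) else 0)) *
            W x y) ^ (1 + s) * (Q y) ^ (-s))
      ≤ ∑ u, μ u *
          ∑ y, (∑ m, (Fintype.card M : ℝ)⁻¹ * W (f u m) y) ^ (1 + s) * (Q y) ^ (-s) :=
  oneshot_converse_renyi_general μ f W Q s hμ0 hμ1 hW0 hQ0 hs0
end

section
/- Let X, Y be finite sets, P_X ∈ P(X) with full support, P_{Y|X} a channel, and Q_Y ∈ P(Y) with full support. Then for any probability distribution R_{XY} on X × Y (absolutely continuous with respect to P_X × P_{Y|X}) and reals s, t: (1−t) D(R_{XY} ‖ P_{XY}) + t D(R_{XY} ‖ P_X × P_Y) + s ∑_y R_Y(y) log(P_Y(y)/Q_Y(y)) ≥ −log ∑_{x,y} P_X(x) P_{Y|X}(y|x)^{1−t} P_Y(y)^{t−s} Q_Y(y)^s, with equality for the minimizing R_{XY} proportional to P_X(x) P_{Y|X}(y|x)^{1−t} P_Y(y)^{t−s} Q_Y(y)^s. In particular, −log ∑_{x,y} P_X(x) P_{Y|X}(y|x)^{1−t}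 P_Y(y)^{t−s} Q_Y(y)^s equals the infimum over R_{XY} of the left-hand side. -/
/-!
Writing `G(x,y) = P(x) W(y|x)^{1−t} P_Y(y)^{t−s} Q(y)^s`, the logarithms in the objective
recombine term by term, so that the objective is `∑ R log (R / G)`: a relative entropy against
the unnormalized weight `G`. Gibbs' inequality `∑ R log (R / G) ≥ −log ∑ G` then gives the
bound, with equality at `R = G / ∑ G`.
-/

open Finset Real

/-- The objective `(1−t) D(R‖P_{XY}) + t D(R‖P_X × P_Y) + s ∑_y R_Y(y) log(P_Y(y)/Q_Y(y))`,
where `P_{XY}(x,y) = P(x)W(y|x)` and `P_Y` is its `Y`-marginal. -/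
noncomputable def varObjective {X Y : Type} [Fintype X] [Fintype Y]
    (P : X → ℝ) (W : X → Y → ℝ) (Q : Y → ℝ) (s t : ℝ) (R : X × Y → ℝ) : ℝ :=
  (1 - t) * ∑ p : X × Y, R p * Real.log (R p / (P p.1 * W p.1 p.2))
    + t * ∑ p : X × Y, R p * Real.log (R p / (P p.1 * (∑ x, P x * W x p.2)))
    + s * ∑ y, (∑ x, R (x, y)) * Real.log ((∑ x, P x * W x y) / Q y)

/-- `S = ∑_{x,y} P(x) W(y|x)^{1−t} P_Y(y)^{t−s} Q(y)^s`. -/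
noncomputable def varPartition {X Y : Type} [Fintype X] [Fintype Y]
    (P : X → ℝ) (W : X → Y → ℝ) (Q : Y → ℝ) (s t : ℝ) : ℝ :=
  ∑ x, ∑ y, P x * (W x y) ^ (1 - t) * (∑ x', P x' * W x' y) ^ (t - s) * (Q y) ^ s

section Gibbs

variable {ι : Type*} [Fintype ι]

lemma sub_le_mul_log_div {w u : ℝ} (hw : 0 ≤ w) (hu : 0 < u) : w - u ≤ w * log (w / u) := by
  have h := mul_le_mul_of_nonneg_left (self_sub_one_le_mul_log (div_nonneg hw hu.le)) hu.le
  rwa [mul_sub, mul_one, ← mul_assoc, mul_div_cancel₀ w hu.ne'] at h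

lemma mul_log_div_mul_eq_add (w : ℝ) {a b : ℝ} (ha : a ≠ 0) (hb : b ≠ 0) :
    w * log (w / (a / b)) = w * log (w / a) + w * log b := by
  rcases eq_or_ne w 0 with rfl | hw
  · simp
  · rw [div_div_eq_mul_div, log_div (mul_ne_zero hw hb) ha, log_mul hw hb, log_div hw ha]
    ring

lemma neg_log_sum_le_sum_mul_log_div {w z : ι → ℝ} (hw : ∀ i, 0 ≤ w i) (hw1 : ∑ i, w i = 1)
    (hz : ∀ i, 0 < z i) :
    -log (∑ i, z i) ≤ ∑ i, w i * log (w i / z i) := by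
  have hS : 0 < ∑ i, z i :=
    sum_pos (fun i _ => hz i) (nonempty_of_sum_ne_zero (hw1 ▸ one_ne_zero))
  have hmass : ∑ i, (w i - z i / ∑ j, z j) = 0 := by
    rw [sum_sub_distrib, hw1, ← sum_div, div_self hS.ne', sub_self]
  have hterm := sum_le_sum fun i (_ : i ∈ univ) => sub_le_mul_log_div (hw i) (div_pos (hz i) hS)
  simp only [mul_log_div_mul_eq_add _ (hz _).ne' hS.ne', sum_add_distrib, ← sum_mul, hw1,
    one_mul, hmass] at hterm
  linarith

lemma sum_div_sum_mul_log_div_eq_neg_log_sum {z : ι → ℝ} (hz : ∀ i, z i ≠ 0) :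
    ∑ i, z i / (∑ j, z j) * log (z i / (∑ j, z j) / z i) = -log (∑ j, z j) := by
  simp only [div_div_cancel_left' (hz _), log_inv, ← sum_mul, ← sum_div]
  rcases eq_or_ne (∑ j, z j) 0 with h | h
  · simp [h]
  · rw [div_self h, one_mul]

end Gibbs

lemma mul_log_div_tilt (r : ℝ) {a w m q : ℝ} (ha : 0 < a) (hw : 0 < w) (hm : 0 < m)
    (hq : 0 < q) (s t : ℝ) :
    (1 - t) * (r * log (r / (a * w))) + t * (r * log (r / (a * m))) + s * (r * log (m / q))
      = r * log (r / (a * w ^ (1 - t) * m ^ (t - s) * q ^ s)) := by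
  rcases eq_or_ne r 0 with rfl | hr
  · simp
  have hw' := rpow_pos_of_pos hw (1 - t)
  have hm' := rpow_pos_of_pos hm (t - s)
  have hq' := rpow_pos_of_pos hq s
  have hlog : log (a * w ^ (1 - t) * m ^ (t - s) * q ^ s)
      = log a + (1 - t) * log w + (t - s) * log m + s * log q := by
    rw [log_mul (by positivity) hq'.ne', log_mul (by positivity) hm'.ne',
      log_mul ha.ne' hw'.ne', log_rpow hw, log_rpow hm, log_rpow hq]
  rw [log_div hr (by positivity), log_div hr (by positivity), log_div hm.ne' hq.ne',
    log_div hr (by positivity), log_mul ha.ne' hw.ne', log_mul ha.ne' hm.ne', hlog]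
  ring

section Tilting

variable {X Y : Type} [Fintype X]

lemma marginal_pos [Nonempty X] {P : X → ℝ} {W : X → Y → ℝ} (hP0 : ∀ x, 0 < P x)
    (hW0 : ∀ x y, 0 < W x y) (y : Y) : 0 < ∑ x, P x * W x y :=
  sum_pos (fun x _ => mul_pos (hP0 x) (hW0 x y)) univ_nonempty

noncomputable def tiltedWeight (P : X → ℝ) (W : X → Y → ℝ) (Q : Y → ℝ) (s t : ℝ)
    (p : X × Y) : ℝ :=
  P p.1 * (W p.1 p.2) ^ (1 - t) * (∑ x', P x' * W x' p.2) ^ (t - s) * (Q p.2) ^ s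

lemma tiltedWeight_pos [Nonempty X] {P : X → ℝ} {W : X → Y → ℝ} {Q : Y → ℝ}
    (hP0 : ∀ x, 0 < P x) (hW0 : ∀ x y, 0 < W x y) (hQ0 : ∀ y, 0 < Q y) (s t : ℝ) (p : X × Y) :
    0 < tiltedWeight P W Q s t p := by
  have := marginal_pos hP0 hW0 p.2
  have := hP0 p.1
  have := hW0 p.1 p.2
  have := hQ0 p.2
  unfold tiltedWeight
  positivity

variable [Fintype Y]

lemma varPartition_eq_sum_tiltedWeight (P : X → ℝ) (W : X → Y → ℝ) (Q : Y → ℝ) (s t : ℝ) :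
    varPartition P W Q s t = ∑ p, tiltedWeight P W Q s t p :=
  (Fintype.sum_prod_type (tiltedWeight P W Q s t)).symm

lemma varObjective_eq_sum_mul_log_div_tiltedWeight [Nonempty X] {P : X → ℝ} {W : X → Y → ℝ}
    {Q : Y → ℝ} (hP0 : ∀ x, 0 < P x) (hW0 : ∀ x y, 0 < W x y) (hQ0 : ∀ y, 0 < Q y)
    (s t : ℝ) (R : X × Y → ℝ) :
    varObjective P W Q s t R = ∑ p, R p * log (R p / tiltedWeight P W Q s t p) := by
  have hmarginal : ∑ y, (∑ x, R (x, y)) * log ((∑ x, P x * W x y) / Q y)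
      = ∑ p : X × Y, R p * log ((∑ x, P x * W x p.2) / Q p.2) := by
    simp only [Fintype.sum_prod_type_right, sum_mul]
  rw [varObjective, hmarginal, mul_sum, mul_sum, mul_sum, ← sum_add_distrib,
    ← sum_add_distrib]
  exact sum_congr rfl fun p _ =>
    mul_log_div_tilt _ (hP0 p.1) (hW0 p.1 p.2) (marginal_pos hP0 hW0 p.2) (hQ0 p.2) s t

end Tilting

theorem neg_log_partition_isLeast_general {X Y : Type} [Fintype X] [Fintype Y]
    (P : X → ℝ) (W : X → Y → ℝ) (Q : Y → ℝ)
    (hP0 : ∀ x, 0 < P x) (hP1 : ∑ x, P x = 1)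
    (hW0 : ∀ x y, 0 < W x y)
    (hQ0 : ∀ y, 0 < Q y) (hQ1 : ∑ y, Q y = 1)
    (s t : ℝ) :
    (∀ R : X × Y → ℝ, (∀ p, 0 ≤ R p) → (∑ p, R p = 1) →
        - Real.log (varPartition P W Q s t) ≤ varObjective P W Q s t R)
    ∧ varObjective P W Q s t
        (fun p => P p.1 * (W p.1 p.2) ^ (1 - t) * (∑ x', P x' * W x' p.2) ^ (t - s)
            * (Q p.2) ^ s / varPartition P W Q s t)
        = - Real.log (varPartition P W Q s t)
    ∧ IsLeast {v : ℝ | ∃ R : X × Y → ℝ, (∀ p, 0 ≤ R p) ∧ (∑ p, R p = 1)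
          ∧ v = varObjective P W Q s t R}
        (- Real.log (varPartition P W Q s t)) := by
  have : Nonempty X := univ_nonempty_iff.mp (nonempty_of_sum_ne_zero (hP1 ▸ one_ne_zero))
  have : Nonempty Y := univ_nonempty_iff.mp (nonempty_of_sum_ne_zero (hQ1 ▸ one_ne_zero))
  have hG := tiltedWeight_pos hP0 hW0 hQ0 s t
  have hS : 0 < varPartition P W Q s t := by
    rw [varPartition_eq_sum_tiltedWeight]
    exact sum_pos (fun p _ => hG p) univ_nonempty
  have lower (R : X × Y → ℝ) (hR0 : ∀ p, 0 ≤ R p) (hR1 : ∑ p, R p = 1) :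
      -log (varPartition P W Q s t) ≤ varObjective P W Q s t R := by
    rw [varObjective_eq_sum_mul_log_div_tiltedWeight hP0 hW0 hQ0, varPartition_eq_sum_tiltedWeight]
    exact neg_log_sum_le_sum_mul_log_div hR0 hR1 hG
  have attained : varObjective P W Q s t (fun p => tiltedWeight P W Q s t p / varPartition P W Q s t)
      = -log (varPartition P W Q s t) := by
    rw [varObjective_eq_sum_mul_log_div_tiltedWeight hP0 hW0 hQ0, varPartition_eq_sum_tiltedWeight]
    exact sum_div_sum_mul_log_div_eq_neg_log_sum fun p => (hG p).ne'
  have hmass : ∑ p, tiltedWeight P W Q s t p / varPartition P W Q s t = 1 := by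
    rw [← sum_div, ← varPartition_eq_sum_tiltedWeight, div_self hS.ne']
  refine ⟨lower, attained, ⟨⟨_, fun p => (div_pos (hG p) hS).le, hmass, attained.symm⟩, ?_⟩⟩
  rintro v ⟨R, hR0, hR1, rfl⟩
  exact lower R hR0 hR1

/-- Variational characterization: for all pmfs `R` on `X × Y`,
`(1−t) D(R‖P_{XY}) + t D(R‖P_X×P_Y) + s ∑_y R_Y log(P_Y/Q_Y) ≥ −log S`, with equality at the
tilted distribution `R* ∝ P(x) W(y|x)^{1−t} P_Y(y)^{t−s} Q(y)^s`; in particular `−log S` is the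
infimum (indeed the minimum) of the objective over all pmfs `R`. -/
theorem neg_log_partition_isLeast {X Y : Type} [Fintype X] [Fintype Y]
    (P : X → ℝ) (W : X → Y → ℝ) (Q : Y → ℝ)
    (hP0 : ∀ x, 0 < P x) (hP1 : ∑ x, P x = 1)
    (hW0 : ∀ x y, 0 < W x y) (hW1 : ∀ x, ∑ y, W x y = 1)
    (hQ0 : ∀ y, 0 < Q y) (hQ1 : ∑ y, Q y = 1)
    (s t : ℝ) :
    (∀ R : X × Y → ℝ, (∀ p, 0 ≤ R p) → (∑ p, R p = 1) →
        - Real.log (varPartition P W Q s t) ≤ varObjective P W Q s t R)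
    ∧ varObjective P W Q s t
        (fun p => P p.1 * (W p.1 p.2) ^ (1 - t) * (∑ x', P x' * W x' p.2) ^ (t - s)
            * (Q p.2) ^ s / varPartition P W Q s t)
        = - Real.log (varPartition P W Q s t)
    ∧ IsLeast {v : ℝ | ∃ R : X × Y → ℝ, (∀ p, 0 ≤ R p) ∧ (∑ p, R p = 1)
          ∧ v = varObjective P W Q s t R}
        (- Real.log (varPartition P W Q s t)) :=
  neg_log_partition_isLeast_general P W Q hP0 hP1 hW0 hQ0 hQ1 s t
end

section
/- Let X, Y be finite sets, P̃_X ∈ P(X), P_{Y|X} a channel and Q_Y a full-support distribution on Y. Then for each x and s > 0, (1/s) log ∑_y P_{Y|X}(y|x)^{1+s} Q_Y(y)^{-s} = max over channels P̃_{Y|X} of [ (−1/s − 1) D(P̃_{Y|X}(·|x) ‖ P_{Y|X}(·|x)) + ∑_y P̃_{Y|X}(y|x) log(P̃_{Y|X}(y|x)/Q_Y(y)) ]; consequently ∑_x P̃_X(x) D_{1+s}(P_{Y|X}(·|x) ‖ Q_Y) = max_{P̃_{Y|X}} { (−1/s − 1) D(P̃_{Y|X}‖P_{Y|X}|P̃_X)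 + D(P̃_{Y|X}‖Q_Y|P̃_X) }. -/
open Finset Real

/-!
Writing `f y = W(y|x)^{1+s} Q(y)^{-s}`, the objective equals `(1/s) ∑_y V(y) log (f(y) / V(y))`
for every distribution `V`. By the tangent-line bound `log t ≤ t - 1`, this sum is at most
`log ∑_y f(y)` (Gibbs' inequality), with equality at the tilted distribution `V = f / ∑ f`.
Averaging over `x` with the nonnegative weights `P̃_X(x)` preserves the maximum, since the
maximization decouples across `x`.
-/

theorem mul_log_div_le {c u v : ℝ} (hc : 0 < c) (hu : 0 < u) (hv : 0 ≤ v) :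
    v * log (u / v) ≤ v * log c + u / c - v := by
  rcases hv.eq_or_lt with rfl | hv
  · simp only [div_zero, log_zero, mul_zero, zero_mul, zero_add, sub_zero]
    positivity
  have htangent : log (u / v) - log c ≤ u / v / c - 1 := by
    rw [← log_div (by positivity) hc.ne']
    exact log_le_sub_one_of_pos (by positivity)
  calc v * log (u / v) = v * (log (u / v) - log c) + v * log c := by ring
    _ ≤ v * (u / v / c - 1) + v * log c := by gcongr
    _ = v * log c + u / c - v := by field_simp; ring

section Gibbs

variable {ι : Type*} [Fintype ι] {f : ι → ℝ}

theorem sum_mul_log_div_le_log_sum (hf : ∀ i, 0 < f i) {V : ι → ℝ} (hV : V ∈ stdSimplex ℝ ι) :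
    ∑ i, V i * log (f i / V i) ≤ log (∑ i, f i) := by
  have hS : 0 < ∑ i, f i :=
    sum_pos (fun i _ => hf i) (nonempty_of_sum_ne_zero (hV.2 ▸ one_ne_zero))
  calc ∑ i, V i * log (f i / V i)
      ≤ ∑ i, (V i * log (∑ j, f j) + f i / ∑ j, f j - V i) :=
        sum_le_sum fun i _ => mul_log_div_le hS (hf i) (hV.1 i)
    _ = log (∑ i, f i) := by
        rw [sum_sub_distrib, sum_add_distrib, ← sum_mul, ← sum_div, hV.2, div_self hS.ne']
        ring

theorem isGreatest_sum_mul_log_div [Nonempty ι] (hf : ∀ i, 0 < f i) :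
    IsGreatest ((fun V => ∑ i, V i * log (f i / V i)) '' stdSimplex ℝ ι) (log (∑ i, f i)) := by
  have hS : 0 < ∑ i, f i := sum_pos (fun i _ => hf i) univ_nonempty
  refine ⟨⟨fun i => f i / ∑ j, f j, ⟨fun i => (div_pos (hf i) hS).le, ?_⟩, ?_⟩, ?_⟩
  · rw [← sum_div, div_self hS.ne']
  · simp only [div_div_cancel₀ (hf _).ne']
    rw [← sum_mul, ← sum_div, div_self hS.ne', one_mul]
  · rintro _ ⟨V, hV, rfl⟩
    exact sum_mul_log_div_le_log_sum hf hV

end Gibbs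

section Renyi

variable {ι : Type*} [Fintype ι]

noncomputable def renyiObjective (s : ℝ) (W Q V : ι → ℝ) : ℝ :=
  (-1 / s - 1) * ∑ i, V i * log (V i / W i) + ∑ i, V i * log (V i / Q i)

theorem renyiObjective_eq_sum_mul_log_div {s : ℝ} (hs : s ≠ 0) {W Q : ι → ℝ}
    (hW : ∀ i, 0 < W i) (hQ : ∀ i, 0 < Q i) (V : ι → ℝ) :
    renyiObjective s W Q V = 1 / s * ∑ i, V i * log (W i ^ (1 + s) * Q i ^ (-s) / V i) := by
  rw [renyiObjective, mul_sum, mul_sum, ← sum_add_distrib]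
  refine sum_congr rfl fun i _ => ?_
  rcases eq_or_ne (V i) 0 with hV | hV
  · simp [hV]
  have hWs := rpow_pos_of_pos (hW i) (1 + s)
  have hQs := rpow_pos_of_pos (hQ i) (-s)
  rw [log_div hV (hW i).ne', log_div hV (hQ i).ne', log_div (mul_pos hWs hQs).ne' hV,
    log_mul hWs.ne' hQs.ne', log_rpow (hW i), log_rpow (hQ i)]
  field_simp
  ring

theorem isGreatest_renyiObjective [Nonempty ι] {s : ℝ} (hs : 0 < s) {W Q : ι → ℝ}
    (hW : ∀ i, 0 < W i) (hQ : ∀ i, 0 < Q i) :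
    IsGreatest (renyiObjective s W Q '' stdSimplex ℝ ι)
      (1 / s * log (∑ i, W i ^ (1 + s) * Q i ^ (-s))) := by
  have hgibbs := isGreatest_sum_mul_log_div fun i => mul_pos (rpow_pos_of_pos (hW i) (1 + s))
    (rpow_pos_of_pos (hQ i) (-s))
  rw [funext (renyiObjective_eq_sum_mul_log_div hs.ne' hW hQ), ← Set.image_image (1 / s * ·)]
  exact (monotone_mul_left_of_nonneg (by positivity)).map_isGreatest hgibbs

end Renyi

theorem isGreatest_sum_mul_image_pi {ι α : Type*} [Fintype ι] {w : ι → ℝ} (hw : ∀ i, 0 ≤ w i)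
    {C : Set α} {F : ι → α → ℝ} {a : ι → ℝ} (h : ∀ i, IsGreatest (F i '' C) (a i)) :
    IsGreatest ((fun V => ∑ i, w i * F i (V i)) '' Set.pi Set.univ fun _ => C)
      (∑ i, w i * a i) := by
  choose V hVC hVa using fun i => (h i).1
  refine ⟨⟨V, fun i _ => hVC i, by simp only [hVa]⟩, ?_⟩
  rintro _ ⟨V, hV, rfl⟩
  exact sum_le_sum fun i _ =>
    mul_le_mul_of_nonneg_left ((h i).2 ⟨V i, hV i (Set.mem_univ i), rfl⟩) (hw i)

theorem renyi_variational_general {X Y : Type} [Fintype X] [Fintype Y]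
    (PX : X → ℝ) (W : X → Y → ℝ) (Q : Y → ℝ) (s : ℝ) (hs : 0 < s)
    (hPX0 : ∀ x, 0 ≤ PX x)
    (hW0 : ∀ x y, 0 < W x y) (hW1 : ∀ x, ∑ y, W x y = 1)
    (hQ0 : ∀ y, 0 < Q y) :
    (∀ x, IsGreatest
        {r : ℝ | ∃ V : Y → ℝ, (∀ y, 0 ≤ V y) ∧ (∑ y, V y = 1) ∧
          r = (-1 / s - 1) * (∑ y, V y * Real.log (V y / W x y))
              + ∑ y, V y * Real.log (V y / Q y)}
        ((1 / s) * Real.log (∑ y, (W x y) ^ (1 + s) * (Q y) ^ (-s))))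
    ∧ IsGreatest
        {r : ℝ | ∃ V : X → Y → ℝ, (∀ x y, 0 ≤ V x y) ∧ (∀ x, ∑ y, V x y = 1) ∧
          r = (-1 / s - 1) * (∑ x, PX x * ∑ y, V x y * Real.log (V x y / W x y))
              + ∑ x, PX x * ∑ y, V x y * Real.log (V x y / Q y)}
        (∑ x, PX x * ((1 / s) * Real.log (∑ y, (W x y) ^ (1 + s) * (Q y) ^ (-s)))) := by
  have hpointwise : ∀ x, IsGreatest (renyiObjective s (W x) Q '' stdSimplex ℝ Y)
      (1 / s * log (∑ y, W x y ^ (1 + s) * Q y ^ (-s))) := fun x =>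
    have : Nonempty Y :=
      univ_nonempty_iff.mp (nonempty_of_sum_ne_zero ((hW1 x).symm ▸ one_ne_zero))
    isGreatest_renyiObjective hs (hW0 x) hQ0
  constructor
  · intro x
    convert hpointwise x using 1
    ext r
    simp [renyiObjective, stdSimplex, eq_comm, and_assoc]
  · convert isGreatest_sum_mul_image_pi hPX0 hpointwise using 1
    ext r
    simp [renyiObjective, stdSimplex, eq_comm, forall_and, and_assoc, mul_add, sum_add_distrib,
      mul_sum, mul_left_comm]

/-- Variational characterization of the Rényi divergence: for each `x` and `s > 0`,
`(1/s) log ∑_y W(y|x)^{1+s} Q(y)^{-s}` is the maximum over distributions `V` on `Y` of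
`(−1/s − 1) D(V ‖ W(·|x)) + ∑_y V(y) log(V(y)/Q(y))`; consequently, averaging over `P̃_X`,
`∑_x P̃_X(x) D_{1+s}(W(·|x)‖Q)` is the maximum over channels `Ṽ` of
`(−1/s − 1) D(Ṽ‖W|P̃_X) + D(Ṽ‖Q|P̃_X)`. -/
theorem renyi_variational {X Y : Type} [Fintype X] [Fintype Y]
    (PX : X → ℝ) (W : X → Y → ℝ) (Q : Y → ℝ) (s : ℝ) (hs : 0 < s)
    (hPX0 : ∀ x, 0 ≤ PX x) (hPX1 : ∑ x, PX x = 1)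
    (hW0 : ∀ x y, 0 < W x y) (hW1 : ∀ x, ∑ y, W x y = 1)
    (hQ0 : ∀ y, 0 < Q y) (hQ1 : ∑ y, Q y = 1) :
    (∀ x, IsGreatest
        {r : ℝ | ∃ V : Y → ℝ, (∀ y, 0 ≤ V y) ∧ (∑ y, V y = 1) ∧
          r = (-1 / s - 1) * (∑ y, V y * Real.log (V y / W x y))
              + ∑ y, V y * Real.log (V y / Q y)}
        ((1 / s) * Real.log (∑ y, (W x y) ^ (1 + s) * (Q y) ^ (-s))))
    ∧ IsGreatest
        {r : ℝ | ∃ V : X → Y → ℝ, (∀ x y, 0 ≤ V x y) ∧ (∀ x, ∑ y, V x y = 1) ∧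
          r = (-1 / s - 1) * (∑ x, PX x * ∑ y, V x y * Real.log (V x y / W x y))
              + ∑ x, PX x * ∑ y, V x y * Real.log (V x y / Q y)}
        (∑ x, PX x * ((1 / s) * Real.log (∑ y, (W x y) ^ (1 + s) * (Q y) ^ (-s)))) :=
  renyi_variational_general PX W Q s hs hPX0 hW0 hW1 hQ0
end

section
/- Let U be a non-negative random variable with E[U] = 1 taking finitely many values, and let s ∈ (0,1). Then E[(U − U^{1−s})/s] ≤ Var(U). -/
/-!
Pointwise, `u ^ (1 - s) = u * u ^ (-s) ≥ u * (1 - s * (u - 1))` by Bernoulli's inequality for the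
negative exponent `-s` (from `exp x ≥ 1 + x` and `log u ≤ u - 1`), i.e. `(u - u ^ (1 - s)) / s ≤ u² - u`.
Averaging against `μ` and using `E[U] = 1` gives the bound.
-/

open Finset

lemma one_sub_mul_le_rpow_neg {u s : ℝ} (hu : 0 < u) (hs : 0 ≤ s) :
    1 - s * (u - 1) ≤ u ^ (-s) := by
  have hlog : s * Real.log u ≤ s * (u - 1) :=
    mul_le_mul_of_nonneg_left (Real.log_le_sub_one_of_pos hu) hs
  calc 1 - s * (u - 1) ≤ -s * Real.log u + 1 := by linarith
    _ ≤ Real.exp (-s * Real.log u) := Real.add_one_le_exp _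
    _ = u ^ (-s) := by rw [Real.rpow_def_of_pos hu, mul_comm]

lemma sub_rpow_one_sub_div_le {u s : ℝ} (hu : 0 ≤ u) (hs : 0 < s) :
    (u - u ^ (1 - s)) / s ≤ u ^ 2 - u := by
  rw [div_le_iff₀ hs]
  rcases hu.eq_or_lt with rfl | hu
  · simpa using Real.rpow_nonneg le_rfl (1 - s)
  have hsplit : u ^ (1 - s) = u * u ^ (-s) := by
    rw [sub_eq_add_neg, Real.rpow_add hu, Real.rpow_one]
  have := mul_le_mul_of_nonneg_left (one_sub_mul_le_rpow_neg hu hs.le) hu.le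
  rw [hsplit]
  nlinarith

theorem expectation_sub_rpow_div_le_var_general {Ω : Type} [Fintype Ω]
    (μ : Ω → ℝ) (U : Ω → ℝ)
    (hμ0 : ∀ ω, 0 ≤ μ ω)
    (hU : ∀ ω, 0 ≤ U ω) (hEU : ∑ ω, μ ω * U ω = 1)
    (s : ℝ) (hs0 : 0 < s) :
    ∑ ω, μ ω * ((U ω - (U ω) ^ (1 - s)) / s) ≤ (∑ ω, μ ω * (U ω) ^ (2 : ℕ)) - 1 := by
  calc ∑ ω, μ ω * ((U ω - (U ω) ^ (1 - s)) / s)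
      ≤ ∑ ω, μ ω * (U ω ^ 2 - U ω) :=
        sum_le_sum fun ω _ =>
          mul_le_mul_of_nonneg_left (sub_rpow_one_sub_div_le (hU ω) hs0) (hμ0 ω)
    _ = (∑ ω, μ ω * U ω ^ 2) - 1 := by
        simp only [mul_sub, sum_sub_distrib, hEU]

/-- For a finitely supported non-negative random variable `U` with `E[U] = 1` and `s ∈ (0,1)`,
`E[(U − U^{1−s})/s] ≤ Var(U) = E[U²] − 1`. -/
theorem expectation_sub_rpow_div_le_var {Ω : Type} [Fintype Ω]
    (μ : Ω → ℝ) (U : Ω → ℝ)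
    (hμ0 : ∀ ω, 0 ≤ μ ω) (hμ1 : ∑ ω, μ ω = 1)
    (hU : ∀ ω, 0 ≤ U ω) (hEU : ∑ ω, μ ω * U ω = 1)
    (s : ℝ) (hs0 : 0 < s) (hs1 : s < 1) :
    ∑ ω, μ ω * ((U ω - (U ω) ^ (1 - s)) / s) ≤ (∑ ω, μ ω * (U ω) ^ (2 : ℕ)) - 1 :=
  expectation_sub_rpow_div_le_var_general μ U hμ0 hU hEU s hs0
end
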